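/- Let X ⊆ ℝⁿ be a polyhedral set and ψ(x) = max_{1≤i≤k₁} ψ₁ᵢ(x) − max_{1≤j≤k₂} ψ₂ⱼ(x), where every ψ₁ᵢ and ψ₂ⱼ is an (indefinite) quadratic function. Let D_F be the set of points at which the function x ↦ max_{1≤i≤k₁} ψ₁ᵢ(x) is Fréchet differentiable. Then the set ψ(D_{(ψ,X)} ∩ D_F) is finite. -/

import Mathlib

/-!
At a d-stationary point `x̄` where `max ψ₁` is differentiable, pick pieces `ψ₁ᵢ`, `ψ₂ⱼ` active
at `x̄`. Since `ψ₁ᵢ ≤ max ψ₁` touch at `x̄`, the gradient of `max ψ₁` at `x̄` is `∇ψ₁ᵢ(x̄)`; since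
`ψ ≤ max ψ₁ - ψ₂ⱼ` touch at `x̄`, the directional derivatives of `ψ` at `x̄` are at most those of
the quadratic `ψ₁ᵢ - ψ₂ⱼ`, so `x̄` is a d-stationary point of `ψ₁ᵢ - ψ₂ⱼ` on `X`, with the same
value.

A quadratic `f` has only finitely many d-stationary values on a polyhedron: if d-stationary
points `x`, `y` have the same active constraints, the line through them stays in `X` a little
beyond both ends, so `∇f(x) ⬝ (y - x) = 0 = ∇f(y) ⬝ (y - x)`, and
`f y - f x = ½ (∇f(x) + ∇f(y)) ⬝ (y - x) = 0`.
-/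

open Matrix Filter Topology

noncomputable def finMax {k : ℕ} (hk : 0 < k) (g : Fin k → ℝ) : ℝ :=
  Finset.univ.sup' (Finset.univ_nonempty_iff.mpr ⟨⟨0, hk⟩⟩) g

/-- The one-sided directional derivative of `ψ` at `x` in direction `v` equals `L`. -/
def HasDirDeriv {n : ℕ} (ψ : (Fin n → ℝ) → ℝ) (x v : Fin n → ℝ) (L : ℝ) : Prop :=
  Filter.Tendsto (fun δ : ℝ => (ψ (x + δ • v) - ψ x) / δ) (nhdsWithin 0 (Set.Ioi 0)) (nhds L)

/-- `x₀` is a d(irectional)-stationary point of `ψ` on `X`. -/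
def DStat {n : ℕ} (ψ : (Fin n → ℝ) → ℝ) (X : Set (Fin n → ℝ)) (x₀ : Fin n → ℝ) : Prop :=
  x₀ ∈ X ∧ ∀ x ∈ X, ∃ L, HasDirDeriv ψ x₀ (x - x₀) L ∧ 0 ≤ L


/-- A polyhedral subset of ℝⁿ: solution set of finitely many linear inequalities. -/
def IsPolyhedral {n : ℕ} (X : Set (Fin n → ℝ)) : Prop :=
  ∃ (m : ℕ) (A : Fin m → Fin n → ℝ) (b : Fin m → ℝ), X = {x | ∀ i, A i ⬝ᵥ x ≤ b i}

lemma le_finMax {k : ℕ} (hk : 0 < k) (g : Fin k → ℝ) (i : Fin k) : g i ≤ finMax hk g :=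
  Finset.le_sup' g (Finset.mem_univ i)

lemma exists_finMax_eq {k : ℕ} (hk : 0 < k) (g : Fin k → ℝ) : ∃ i, finMax hk g = g i := by
  obtain ⟨i, -, hi⟩ := Finset.exists_mem_eq_sup' (Finset.univ_nonempty_iff.mpr ⟨⟨0, hk⟩⟩) g
  exact ⟨i, hi⟩

namespace HasDirDeriv

variable {n : ℕ} {f g : (Fin n → ℝ) → ℝ} {x v : Fin n → ℝ} {a b : ℝ}

lemma unique (hf : HasDirDeriv f x v a) (hf' : HasDirDeriv f x v b) : a = b :=
  tendsto_nhds_unique hf hf'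

lemma sub (hf : HasDirDeriv f x v a) (hg : HasDirDeriv g x v b) :
    HasDirDeriv (fun y => f y - g y) x v (a - b) :=
  (Tendsto.sub hf hg).congr fun δ => by ring

lemma le_of_le_of_eq (hf : HasDirDeriv f x v a) (hg : HasDirDeriv g x v b)
    (hle : ∀ y, f y ≤ g y) (heq : f x = g x) : a ≤ b := by
  refine le_of_tendsto_of_tendsto hf hg ?_
  filter_upwards [self_mem_nhdsWithin] with δ (hδ : 0 < δ)
  rw [heq]
  gcongr
  exact hle _

end HasDirDeriv

lemma HasLineDerivAt.hasDirDeriv {n : ℕ} {f : (Fin n → ℝ) → ℝ} {x v : Fin n → ℝ} {L : ℝ}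
    (hf : HasLineDerivAt ℝ f L x v) : HasDirDeriv f x v L :=
  hf.tendsto_slope_zero_right.congr fun δ => by rw [smul_eq_mul, inv_mul_eq_div]

lemma DifferentiableAt.hasDirDeriv {n : ℕ} {f : (Fin n → ℝ) → ℝ} {x : Fin n → ℝ}
    (hf : DifferentiableAt ℝ f x) (v : Fin n → ℝ) : HasDirDeriv f x v (fderiv ℝ f x v) :=
  (hf.hasFDerivAt.hasLineDerivAt v).hasDirDeriv

lemma fderiv_apply_eq_of_le_of_eq {n : ℕ} {f g : (Fin n → ℝ) → ℝ} {x w : Fin n → ℝ}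
    (hg : DifferentiableAt ℝ g x) (hf : ∀ v, HasDirDeriv f x v (w ⬝ᵥ v))
    (hle : ∀ y, f y ≤ g y) (heq : f x = g x) (v : Fin n → ℝ) : fderiv ℝ g x v = w ⬝ᵥ v := by
  have hv := (hf v).le_of_le_of_eq (hg.hasDirDeriv v) hle heq
  have hnegv := (hf (-v)).le_of_le_of_eq (hg.hasDirDeriv (-v)) hle heq
  rw [dotProduct_neg, map_neg] at hnegv
  linarith

lemma DStat.sub_of_le_of_eq {n : ℕ} {X : Set (Fin n → ℝ)} {M₁ M₂ f₁ f₂ : (Fin n → ℝ) → ℝ}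
    {x w₁ w₂ : Fin n → ℝ} (hx : DStat (fun y => M₁ y - M₂ y) X x)
    (hM₁ : DifferentiableAt ℝ M₁ x)
    (hf₁ : ∀ v, HasDirDeriv f₁ x v (w₁ ⬝ᵥ v)) (hf₂ : ∀ v, HasDirDeriv f₂ x v (w₂ ⬝ᵥ v))
    (hle₁ : ∀ y, f₁ y ≤ M₁ y) (heq₁ : f₁ x = M₁ x)
    (hle₂ : ∀ y, f₂ y ≤ M₂ y) (heq₂ : f₂ x = M₂ x) :
    DStat (fun y => f₁ y - f₂ y) X x := by
  refine ⟨hx.1, fun z hz => ⟨_, (hf₁ _).sub (hf₂ _), ?_⟩⟩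
  obtain ⟨L, hL, hL₀⟩ := hx.2 z hz
  have hmaj := (hM₁.hasDirDeriv (z - x)).sub (hf₂ (z - x))
  rw [fderiv_apply_eq_of_le_of_eq hM₁ hf₁ hle₁ heq₁] at hmaj
  have := hL.le_of_le_of_eq hmaj (fun y => sub_le_sub_left (hle₂ y) _) (by rw [heq₂])
  linarith

section Quadratic

variable {n : ℕ}

noncomputable def quadFun (Q : Matrix (Fin n) (Fin n) ℝ) (q : Fin n → ℝ) (α : ℝ)
    (x : Fin n → ℝ) : ℝ :=
  (1/2) * (x ⬝ᵥ Q *ᵥ x) + q ⬝ᵥ x + α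

variable {Q : Matrix (Fin n) (Fin n) ℝ} (q : Fin n → ℝ) (α : ℝ)

lemma dotProduct_mulVec_comm_of_isSymm (hQ : Q.IsSymm) (x y : Fin n → ℝ) :
    x ⬝ᵥ Q *ᵥ y = y ⬝ᵥ Q *ᵥ x := by
  have := dotProduct_transpose_mulVec Q x y
  rwa [hQ.eq] at this

lemma quadFun_add_smul (hQ : Q.IsSymm) (x v : Fin n → ℝ) (t : ℝ) :
    quadFun Q q α (x + t • v)
      = quadFun Q q α x + t * ((Q *ᵥ x + q) ⬝ᵥ v) + t ^ 2 * ((1/2) * (v ⬝ᵥ Q *ᵥ v)) := by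
  simp only [quadFun, mulVec_add, mulVec_smul, dotProduct_add, add_dotProduct,
    dotProduct_smul, smul_dotProduct, smul_eq_mul]
  rw [dotProduct_comm (Q *ᵥ x) v, dotProduct_mulVec_comm_of_isSymm hQ v x]
  ring

lemma quadFun_sub_quadFun (hQ : Q.IsSymm) (x y : Fin n → ℝ) :
    quadFun Q q α y - quadFun Q q α x
      = (1/2) * ((Q *ᵥ x + q) ⬝ᵥ (y - x) + (Q *ᵥ y + q) ⬝ᵥ (y - x)) := by
  simp only [quadFun, dotProduct_sub, add_dotProduct]
  rw [dotProduct_comm (Q *ᵥ x) y, dotProduct_comm (Q *ᵥ x) x, dotProduct_comm (Q *ᵥ y) y,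
    dotProduct_comm (Q *ᵥ y) x, dotProduct_mulVec_comm_of_isSymm hQ y x]
  ring

lemma quadFun_sub {Q₁ Q₂ : Matrix (Fin n) (Fin n) ℝ} (q₁ q₂ : Fin n → ℝ) (α₁ α₂ : ℝ)
    (x : Fin n → ℝ) :
    quadFun (Q₁ - Q₂) (q₁ - q₂) (α₁ - α₂) x = quadFun Q₁ q₁ α₁ x - quadFun Q₂ q₂ α₂ x := by
  simp only [quadFun, sub_mulVec, dotProduct_sub, sub_dotProduct]
  ring

lemma hasLineDerivAt_quadFun (hQ : Q.IsSymm) (x v : Fin n → ℝ) :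
    HasLineDerivAt ℝ (quadFun Q q α) ((Q *ᵥ x + q) ⬝ᵥ v) x v := by
  have hray : HasDerivAt (fun t : ℝ => quadFun Q q α x + t * ((Q *ᵥ x + q) ⬝ᵥ v)
      + t ^ 2 * ((1/2) * (v ⬝ᵥ Q *ᵥ v))) ((Q *ᵥ x + q) ⬝ᵥ v) 0 :=
    (((hasDerivAt_const 0 (quadFun Q q α x)).add
      ((hasDerivAt_id' 0).mul_const ((Q *ᵥ x + q) ⬝ᵥ v))).add
      ((hasDerivAt_pow 2 0).mul_const ((1/2) * (v ⬝ᵥ Q *ᵥ v)))).congr_deriv (by simp)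
  unfold HasLineDerivAt
  simp_rw [quadFun_add_smul q α hQ]
  exact hray

lemma hasDirDeriv_quadFun (hQ : Q.IsSymm) (x v : Fin n → ℝ) :
    HasDirDeriv (quadFun Q q α) x v ((Q *ᵥ x + q) ⬝ᵥ v) :=
  (hasLineDerivAt_quadFun q α hQ x v).hasDirDeriv

lemma DStat.gradient_dotProduct_nonneg {X : Set (Fin n → ℝ)} {x : Fin n → ℝ} (hQ : Q.IsSymm)
    (hx : DStat (quadFun Q q α) X x) {z : Fin n → ℝ} (hz : z ∈ X) :
    0 ≤ (Q *ᵥ x + q) ⬝ᵥ (z - x) := by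
  obtain ⟨L, hL, hL₀⟩ := hx.2 z hz
  rwa [hL.unique (hasDirDeriv_quadFun q α hQ x (z - x))] at hL₀

end Quadratic

section Polyhedron

variable {m n : ℕ} (A : Fin m → Fin n → ℝ) (b : Fin m → ℝ)

def activeSet (x : Fin n → ℝ) : Set (Fin m) := {i | A i ⬝ᵥ x = b i}

variable {A b}

lemma eventually_add_smul_sub_mem {x y : Fin n → ℝ} (hx : ∀ i, A i ⬝ᵥ x ≤ b i)
    (hxy : activeSet A b x ⊆ activeSet A b y) :
    ∀ᶠ t : ℝ in 𝓝 0, ∀ i, A i ⬝ᵥ (x + t • (y - x)) ≤ b i := by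
  rw [eventually_all]
  intro i
  simp only [dotProduct_add, dotProduct_smul, smul_eq_mul]
  rcases (hx i).lt_or_eq with hlt | hact
  · have hcont : Continuous fun t : ℝ => A i ⬝ᵥ x + t * (A i ⬝ᵥ (y - x)) := by fun_prop
    exact (hcont.tendsto' 0 _ (by simp)).eventually (eventually_le_nhds hlt)
  · have hdir : A i ⬝ᵥ (y - x) = 0 := by
      rw [dotProduct_sub, hxy hact, hact, sub_self]
    exact .of_forall fun t => by rw [hdir, mul_zero, add_zero, hact]

lemma dotProduct_sub_eq_zero_of_activeSet_subset {w x y : Fin n → ℝ}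
    (hx : ∀ i, A i ⬝ᵥ x ≤ b i) (hy : ∀ i, A i ⬝ᵥ y ≤ b i)
    (hw : ∀ z, (∀ i, A i ⬝ᵥ z ≤ b i) → 0 ≤ w ⬝ᵥ (z - x))
    (hxy : activeSet A b x ⊆ activeSet A b y) : w ⬝ᵥ (y - x) = 0 := by
  obtain ⟨t, ht, htneg⟩ :=
    ((eventually_add_smul_sub_mem hx hxy).filter_mono nhdsWithin_le_nhds |>.and
      (self_mem_nhdsWithin : Set.Iio (0 : ℝ) ∈ 𝓝[<] 0)).exists
  have hback := hw _ ht
  rw [add_sub_cancel_left, dotProduct_smul, smul_eq_mul] at hback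
  have hfwd := hw y hy
  nlinarith

lemma quadFun_eq_of_activeSet_eq {Q : Matrix (Fin n) (Fin n) ℝ} (hQ : Q.IsSymm) (q : Fin n → ℝ)
    (α : ℝ) {x y : Fin n → ℝ} (hx : ∀ i, A i ⬝ᵥ x ≤ b i) (hy : ∀ i, A i ⬝ᵥ y ≤ b i)
    (hsx : ∀ z, (∀ i, A i ⬝ᵥ z ≤ b i) → 0 ≤ (Q *ᵥ x + q) ⬝ᵥ (z - x))
    (hsy : ∀ z, (∀ i, A i ⬝ᵥ z ≤ b i) → 0 ≤ (Q *ᵥ y + q) ⬝ᵥ (z - y))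
    (hxy : activeSet A b x = activeSet A b y) :
    quadFun Q q α x = quadFun Q q α y := by
  have hperp_x := dotProduct_sub_eq_zero_of_activeSet_subset hx hy hsx hxy.le
  have hperp_y := dotProduct_sub_eq_zero_of_activeSet_subset hy hx hsy hxy.ge
  rw [← neg_sub, dotProduct_neg, neg_eq_zero] at hperp_y
  linarith [quadFun_sub_quadFun q α hQ x y]

end Polyhedron

theorem finite_image_dStat_quadFun {n : ℕ} {X : Set (Fin n → ℝ)} (hX : IsPolyhedral X)
    {Q : Matrix (Fin n) (Fin n) ℝ} (hQ : Q.IsSymm) (q : Fin n → ℝ) (α : ℝ) :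
    (quadFun Q q α '' {x | DStat (quadFun Q q α) X x}).Finite := by
  obtain ⟨m, A, b, rfl⟩ := hX
  have hfiber : ∀ I : Set (Fin m),
      (quadFun Q q α '' {x | DStat (quadFun Q q α) {x | ∀ i, A i ⬝ᵥ x ≤ b i} x ∧
        activeSet A b x = I}).Subsingleton := by
    rintro I _ ⟨x, ⟨hx, rfl⟩, rfl⟩ _ ⟨y, ⟨hy, hxy⟩, rfl⟩
    exact quadFun_eq_of_activeSet_eq hQ q α hx.1 hy.1
      (fun z hz => hx.gradient_dotProduct_nonneg q α hQ hz)
      (fun z hz => hy.gradient_dotProduct_nonneg q α hQ hz) hxy.symm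
  refine (Set.finite_iUnion fun I => (hfiber I).finite).subset ?_
  rintro _ ⟨x, hx, rfl⟩
  exact Set.mem_iUnion.2 ⟨_, x, ⟨hx, rfl⟩, rfl⟩

/-- Corollary 5(b): for `ψ = max_i ψ₁ᵢ - max_j ψ₂ⱼ` with all pieces (indefinite)
quadratic, `ψ` takes only finitely many values on `D_{(ψ,X)} ∩ D_F`, where `D_F` is the
set of Fréchet differentiability points of `x ↦ max_i ψ₁ᵢ(x)`. -/
theorem stmt_7 {n k₁ k₂ : ℕ} (hk₁ : 0 < k₁) (hk₂ : 0 < k₂)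
    (X : Set (Fin n → ℝ)) (hX : IsPolyhedral X)
    (Q₁ : Fin k₁ → Matrix (Fin n) (Fin n) ℝ) (q₁ : Fin k₁ → Fin n → ℝ) (α₁ : Fin k₁ → ℝ)
    (hQ₁ : ∀ i, (Q₁ i).IsSymm)
    (Q₂ : Fin k₂ → Matrix (Fin n) (Fin n) ℝ) (q₂ : Fin k₂ → Fin n → ℝ) (α₂ : Fin k₂ → ℝ)
    (hQ₂ : ∀ j, (Q₂ j).IsSymm)
    (ψ₁ : Fin k₁ → (Fin n → ℝ) → ℝ)
    (hψ₁ : ∀ i x, ψ₁ i x = (1/2) * (x ⬝ᵥ (Q₁ i).mulVec x) + q₁ i ⬝ᵥ x + α₁ i)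
    (ψ₂ : Fin k₂ → (Fin n → ℝ) → ℝ)
    (hψ₂ : ∀ j x, ψ₂ j x = (1/2) * (x ⬝ᵥ (Q₂ j).mulVec x) + q₂ j ⬝ᵥ x + α₂ j)
    (ψ : (Fin n → ℝ) → ℝ)
    (hψ : ∀ x, ψ x = finMax hk₁ (fun i => ψ₁ i x) - finMax hk₂ (fun j => ψ₂ j x))
    (DF : Set (Fin n → ℝ))
    (hDF : DF = {x | DifferentiableAt ℝ (fun y => finMax hk₁ (fun i => ψ₁ i y)) x}) :
    (ψ '' ({x | DStat ψ X x} ∩ DF)).Finite := by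
  obtain rfl : ψ₁ = fun i => quadFun (Q₁ i) (q₁ i) (α₁ i) := funext₂ hψ₁
  obtain rfl : ψ₂ = fun j => quadFun (Q₂ j) (q₂ j) (α₂ j) := funext₂ hψ₂
  obtain rfl : ψ = fun x => finMax hk₁ (fun i => quadFun (Q₁ i) (q₁ i) (α₁ i) x)
      - finMax hk₂ (fun j => quadFun (Q₂ j) (q₂ j) (α₂ j) x) :=
    funext hψ
  subst hDF
  refine (Set.finite_iUnion fun p : Fin k₁ × Fin k₂ => finite_image_dStat_quadFun hX
    ((hQ₁ p.1).sub (hQ₂ p.2)) (q₁ p.1 - q₂ p.2) (α₁ p.1 - α₂ p.2)).subset ?_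
  rintro _ ⟨x, ⟨hx, hdiff⟩, rfl⟩
  obtain ⟨i, hi⟩ := exists_finMax_eq hk₁ fun i => quadFun (Q₁ i) (q₁ i) (α₁ i) x
  obtain ⟨j, hj⟩ := exists_finMax_eq hk₂ fun j => quadFun (Q₂ j) (q₂ j) (α₂ j) x
  have hsub : quadFun (Q₁ i - Q₂ j) (q₁ i - q₂ j) (α₁ i - α₂ j)
      = fun y => quadFun (Q₁ i) (q₁ i) (α₁ i) y - quadFun (Q₂ j) (q₂ j) (α₂ j) y :=
    funext (quadFun_sub _ _ _ _)
  refine Set.mem_iUnion.2 ⟨(i, j), x, ?_, by simp only [hsub, hi, hj]⟩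
  rw [Set.mem_ofPred_eq, hsub]
  exact hx.sub_of_le_of_eq hdiff (hasDirDeriv_quadFun _ _ (hQ₁ i) x)
    (hasDirDeriv_quadFun _ _ (hQ₂ j) x)
    (fun y => le_finMax hk₁ (fun i => quadFun (Q₁ i) (q₁ i) (α₁ i) y) i) hi.symm
    (fun y => le_finMax hk₂ (fun j => quadFun (Q₂ j) (q₂ j) (α₂ j) y) j) hj.symm
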